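/- Let G be a locally compact Hausdorff groupoid, H ⊆ G a closed subgroupoid, and Y a left H-space with anchor map p : Y → H^(0). Then the action of H on the fibred product G ×_{G^(0)} Y := {(g,y) ∈ G × Y : d(g) = p(y)}, given by h · (g,y) = (g h^{-1}, h y) with anchor map (g,y) ↦ d(g), is a proper action. -/
import Mathlib


open MeasureTheory Topology Filter
open scoped ENNReal

universe u v

/-- A locally compact Hausdorff groupoid, modelled as a type `G` with a partially
defined multiplication (via the composability predicate `Comp`), an inversion,
and continuity of the structure maps. -/
structure TopGroupoid (G : Type u) [TopologicalSpace G] where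
  mul : G → G → G
  inv : G → G
  Comp : G → G → Prop
  inv_inv : ∀ g, inv (inv g) = g
  comp_inv : ∀ g, Comp g (inv g)
  comp_iff : ∀ g h, Comp g h ↔ mul (inv g) g = mul h (inv h)
  assoc : ∀ g₁ g₂ g₃, Comp g₁ g₂ → Comp g₂ g₃ →
    Comp (mul g₁ g₂) g₃ ∧ Comp g₁ (mul g₂ g₃) ∧
      mul (mul g₁ g₂) g₃ = mul g₁ (mul g₂ g₃)
  inv_mul_cancel_left : ∀ g h, Comp g h → mul (inv g) (mul g h) = h
  mul_inv_cancel_right : ∀ g h, Comp g h → mul (mul g h) (inv h) = g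
  dmul : ∀ g h, Comp g h → mul (inv (mul g h)) (mul g h) = mul (inv h) h
  rmul : ∀ g h, Comp g h → mul (mul g h) (inv (mul g h)) = mul g (inv g)
  continuous_inv : Continuous inv
  continuous_mul : Continuous fun p : {p : G × G // Comp p.1 p.2} => mul p.1.1 p.1.2

namespace TopGroupoid

variable {G : Type u} [TopologicalSpace G] (𝒢 : TopGroupoid G)

/-- The domain map `d(g) = g⁻¹ g`. -/
def d (g : G) : G := 𝒢.mul (𝒢.inv g) g

/-- The range map `r(g) = g g⁻¹`. -/
def r (g : G) : G := 𝒢.mul g (𝒢.inv g)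

/-- The unit space `G⁽⁰⁾ = {g | g = g⁻¹ = g²}`. -/
def units : Set G := {g | 𝒢.inv g = g ∧ 𝒢.mul g g = g}

theorem comp_iff' (g h : G) : 𝒢.Comp g h ↔ 𝒢.d g = 𝒢.r h := 𝒢.comp_iff g h

theorem d_inv (g : G) : 𝒢.d (𝒢.inv g) = 𝒢.r g := by
  simp only [d, r, 𝒢.inv_inv]

theorem r_inv (g : G) : 𝒢.r (𝒢.inv g) = 𝒢.d g := by
  simp only [d, r, 𝒢.inv_inv]

theorem d_mul {g h : G} (hc : 𝒢.Comp g h) : 𝒢.d (𝒢.mul g h) = 𝒢.d h := 𝒢.dmul g h hc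

theorem r_mul {g h : G} (hc : 𝒢.Comp g h) : 𝒢.r (𝒢.mul g h) = 𝒢.r g := 𝒢.rmul g h hc

theorem comp_inv_right {g h : G} (hd : 𝒢.d g = 𝒢.d h) : 𝒢.Comp g (𝒢.inv h) := by
  rw [𝒢.comp_iff', 𝒢.r_inv]; exact hd

theorem comp_inv_left {g h : G} (hr : 𝒢.r g = 𝒢.r h) : 𝒢.Comp (𝒢.inv g) h := by
  rw [𝒢.comp_iff', 𝒢.d_inv]; exact hr

/-- `G` is étale if the domain map is a local homeomorphism. -/
def Etale : Prop := IsLocalHomeomorph 𝒢.d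

/-- An open bisection: an open set on which both `d` and `r` restrict to
homeomorphisms onto open subsets. -/
def IsBisection (U : Set G) : Prop :=
  IsOpen U ∧ IsOpenEmbedding (U.restrict 𝒢.d) ∧ IsOpenEmbedding (U.restrict 𝒢.r)

/-- `G` is ample if the compact open bisections form a basis of the topology. -/
def Ample : Prop :=
  TopologicalSpace.IsTopologicalBasis {U : Set G | 𝒢.IsBisection U ∧ IsCompact U}

/-- A subgroupoid: a subset closed under inversion and (composable) products. -/
def IsSubgroupoid (H : Set G) : Prop :=
  (∀ g ∈ H, 𝒢.inv g ∈ H) ∧ ∀ g h, g ∈ H → h ∈ H → 𝒢.Comp g h → 𝒢.mul g h ∈ H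

end TopGroupoid

/-- A continuous (left) action of a subgroupoid `H ⊆ G` on a topological space `Y`. -/
structure SubActionCore {G : Type u} [TopologicalSpace G] (𝒢 : TopGroupoid G)
    (H : Set G) (Y : Type v) [TopologicalSpace Y] where
  p : Y → G
  p_mem : ∀ y, p y ∈ 𝒢.units ∩ H
  continuous_p : Continuous p
  act : G → Y → Y
  continuous_act : Continuous fun q : {q : G × Y // q.1 ∈ H ∧ 𝒢.d q.1 = p q.2} =>
    act q.val.1 q.val.2
  p_act : ∀ h y, h ∈ H → 𝒢.d h = p y → p (act h y) = 𝒢.r h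
  act_mul : ∀ g h y, g ∈ H → h ∈ H → 𝒢.Comp g h → 𝒢.d h = p y →
    act (𝒢.mul g h) y = act g (act h y)
  act_unit : ∀ y, act (p y) y = y

section Aux

namespace TopGroupoid

variable {G : Type u} [TopologicalSpace G] (𝒢 : TopGroupoid G)

theorem continuous_d : Continuous 𝒢.d := by
  have h1 : Continuous fun g : G => (⟨(𝒢.inv g, g), by
      have := 𝒢.comp_inv (𝒢.inv g); rwa [𝒢.inv_inv] at this⟩ :
      {p : G × G // 𝒢.Comp p.1 p.2}) :=
    Continuous.subtype_mk (𝒢.continuous_inv.prodMk continuous_id) _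
  exact 𝒢.continuous_mul.comp h1

theorem continuous_r : Continuous 𝒢.r := by
  have h1 : Continuous fun g : G => (⟨(g, 𝒢.inv g), 𝒢.comp_inv g⟩ :
      {p : G × G // 𝒢.Comp p.1 p.2}) :=
    Continuous.subtype_mk (continuous_id.prodMk 𝒢.continuous_inv) _
  exact 𝒢.continuous_mul.comp h1

end TopGroupoid

end Aux

/-- For a closed subgroupoid `H ⊆ G` and a left `H`-space `Y`, the
action of `H` on the fibred product `G ×_{G⁽⁰⁾} Y = {(g,y) | d(g) = p(y)}` given by
`h · (g, y) = (g h⁻¹, h y)` (anchor `(g,y) ↦ d(g)`) is proper: for every compact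
subset `K` of the fibred product, `{h ∈ H | hK ∩ K ≠ ∅}` is compact. -/
theorem fibred_product_action_proper {G : Type u} {Y : Type v} [TopologicalSpace G]
    [T2Space G] [LocallyCompactSpace G] [TopologicalSpace Y] [T2Space Y]
    [LocallyCompactSpace Y] (𝒢 : TopGroupoid G) (H : Set G)
    (hH : 𝒢.IsSubgroupoid H) (hHcl : IsClosed H) (A : SubActionCore 𝒢 H Y)
    (K : Set {z : G × Y // 𝒢.d z.1 = A.p z.2}) (hK : IsCompact K) :
    IsCompact {h : G | h ∈ H ∧ ∃ z ∈ K, 𝒢.d h = A.p (z : G × Y).2 ∧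
      (𝒢.mul (z : G × Y).1 (𝒢.inv h), A.act h (z : G × Y).2) ∈ Subtype.val '' K} := by
  classical
  have hdc : Continuous 𝒢.d := 𝒢.continuous_d
  have hrc : Continuous 𝒢.r := 𝒢.continuous_r
  -- the set of first coordinates of K
  set KG : Set G := (fun z : {z : G × Y // 𝒢.d z.1 = A.p z.2} => z.val.1) '' K with hKGdef
  have hKG : IsCompact KG := hK.image (continuous_fst.comp continuous_subtype_val)
  -- the compact set M ⊇ the target set
  have hTclosed : IsClosed {p : G × G | 𝒢.Comp (𝒢.inv p.1) p.2} := by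
    have heq : {p : G × G | 𝒢.Comp (𝒢.inv p.1) p.2} = {p : G × G | 𝒢.r p.1 = 𝒢.r p.2} := by
      ext p; rw [Set.mem_setOf_eq, Set.mem_setOf_eq, 𝒢.comp_iff', 𝒢.d_inv]
    rw [heq]
    exact isClosed_eq (hrc.comp continuous_fst) (hrc.comp continuous_snd)
  have hφ : Continuous fun q : {p : G × G // 𝒢.Comp (𝒢.inv p.1) p.2} =>
      𝒢.mul (𝒢.inv q.val.1) q.val.2 := by
    have h1 : Continuous fun q : {p : G × G // 𝒢.Comp (𝒢.inv p.1) p.2} =>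
        (⟨(𝒢.inv q.val.1, q.val.2), q.prop⟩ : {p : G × G // 𝒢.Comp p.1 p.2}) :=
      Continuous.subtype_mk
        ((𝒢.continuous_inv.comp (continuous_fst.comp continuous_subtype_val)).prodMk
          (continuous_snd.comp continuous_subtype_val)) _
    exact 𝒢.continuous_mul.comp h1
  set M : Set G := (fun q : {p : G × G // 𝒢.Comp (𝒢.inv p.1) p.2} =>
      𝒢.mul (𝒢.inv q.val.1) q.val.2) '' (Subtype.val ⁻¹' (KG ×ˢ KG)) with hMdef
  have hM : IsCompact M :=
    (hTclosed.isClosedEmbedding_subtypeVal.isCompact_preimage (hKG.prod hKG)).image hφ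
  -- the closed set D and the map F
  set D : Set (G × {z : G × Y // 𝒢.d z.1 = A.p z.2}) := {w | w.1 ∈ H ∧ 𝒢.d w.1 = A.p w.2.val.2} with hDdef
  have hD : IsClosed D := by
    refine IsClosed.inter (hHcl.preimage continuous_fst) (isClosed_eq (hdc.comp continuous_fst)
      (A.continuous_p.comp (continuous_snd.comp (continuous_subtype_val.comp continuous_snd))))
  set F : D → G × Y := fun w =>
    (𝒢.mul w.val.2.val.1 (𝒢.inv w.val.1), A.act w.val.1 w.val.2.val.2) with hFdef
  have hF : Continuous F := by
    refine Continuous.prodMk ?_ ?_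
    · have h1 : Continuous fun w : D => (⟨(w.val.2.val.1, 𝒢.inv w.val.1),
          𝒢.comp_inv_right (w.val.2.prop.trans w.prop.2.symm)⟩ :
          {p : G × G // 𝒢.Comp p.1 p.2}) :=
        Continuous.subtype_mk
          (((continuous_subtype_val.comp (continuous_snd.comp continuous_subtype_val)).fst).prodMk
            (𝒢.continuous_inv.comp (continuous_fst.comp continuous_subtype_val))) _
      exact 𝒢.continuous_mul.comp h1
    · have h1 : Continuous fun w : D => (⟨(w.val.1, w.val.2.val.2),
          ⟨w.prop.1, w.prop.2⟩⟩ : {q : G × Y // q.1 ∈ H ∧ 𝒢.d q.1 = A.p q.2}) :=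
        Continuous.subtype_mk
          ((continuous_fst.comp continuous_subtype_val).prodMk
            (continuous_snd.comp (continuous_subtype_val.comp
              (continuous_snd.comp continuous_subtype_val)))) _
      exact A.continuous_act.comp h1
  -- K as a subset of G × Y is closed
  have hKc : IsClosed (Subtype.val '' K : Set (G × Y)) :=
    (hK.image continuous_subtype_val).isClosed
  set E : Set (G × {z : G × Y // 𝒢.d z.1 = A.p z.2}) := Subtype.val '' (F ⁻¹' (Subtype.val '' K)) with hEdef
  have hE : IsClosed E :=
    hD.isClosedEmbedding_subtypeVal.isClosedMap _ (hKc.preimage hF)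
  set W : Set (G × {z : G × Y // 𝒢.d z.1 = A.p z.2}) := (M ×ˢ K) ∩ (D ∩ E) with hWdef
  have hW : IsCompact W := ((hM.prod hK).inter_right (hD.inter hE))
  have hset : {h : G | h ∈ H ∧ ∃ z ∈ K, 𝒢.d h = A.p (z : G × Y).2 ∧
      (𝒢.mul (z : G × Y).1 (𝒢.inv h), A.act h (z : G × Y).2) ∈ Subtype.val '' K}
      = Prod.fst '' W := by
    ext h
    constructor
    · rintro ⟨hhH, z, hzK, hdh, hpair⟩
      have hcomp : 𝒢.Comp z.val.1 (𝒢.inv h) := 𝒢.comp_inv_right (z.prop.trans hdh.symm)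
      obtain ⟨z', hz'K, hz'⟩ := hpair
      have hhM : h ∈ M := by
        obtain ⟨a, ha⟩ : ∃ a, 𝒢.mul z.val.1 (𝒢.inv h) = a := ⟨_, rfl⟩
        have hcompag : 𝒢.Comp (𝒢.inv a) z.val.1 :=
          ha ▸ 𝒢.comp_inv_left (𝒢.r_mul hcomp)
        have hah : 𝒢.mul a h = z.val.1 := by
          rw [← ha]
          have := 𝒢.mul_inv_cancel_right z.val.1 (𝒢.inv h) hcomp
          rwa [𝒢.inv_inv] at this
        have hcomp_ah : 𝒢.Comp a h := by
          rw [← ha, 𝒢.comp_iff', 𝒢.d_mul hcomp, 𝒢.d_inv]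
        have hφval : 𝒢.mul (𝒢.inv a) z.val.1 = h := by
          rw [← hah]
          exact 𝒢.inv_mul_cancel_left _ _ hcomp_ah
        refine ⟨⟨(a, z.val.1), hcompag⟩, ?_, hφval⟩
        exact Set.mem_preimage.2 ⟨⟨z', hz'K, (congrArg Prod.fst hz').trans ha⟩, ⟨z, hzK, rfl⟩⟩
      refine ⟨(h, z), ⟨⟨hhM, hzK⟩, ⟨hhH, hdh⟩, ?_⟩, rfl⟩
      exact ⟨⟨(h, z), ⟨hhH, hdh⟩⟩, ⟨z', hz'K, hz'⟩, rfl⟩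
    · rintro ⟨⟨h', z⟩, ⟨⟨_, hzK⟩, ⟨hhH, hdh⟩, hmemE⟩, rfl⟩
      refine ⟨hhH, z, hzK, hdh, ?_⟩
      obtain ⟨⟨wv, wp⟩, hw', hval⟩ := hmemE
      have hval' : wv = (h', z) := hval
      subst hval'
      exact hw'
  rw [hset]
  exact hW.image continuous_fst
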